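/- Let E be a strongly archimedean convex SEA with property A. Then for all a,b∈E and λ∈[0,1]: a∘(λb)=(λa)∘b=λ(a∘b); consequently, if a|b then a|(λb). -/

import Mathlib

universe u

/-- An effect algebra: the partially defined sum `⊕` is encoded via `Option`. -/
class EffectAlgebra (E : Type u) where
  oplus : E → E → Option E
  zero : E
  one : E
  oplus_comm : ∀ a b : E, oplus a b = oplus b a
  oplus_assoc : ∀ {a b c ab abc : E}, oplus a b = some ab → oplus ab c = some abc →
    ∃ bc : E, oplus b c = some bc ∧ oplus a bc = some abc
  exists_perp : ∀ a : E, ∃ b : E, oplus a b = some one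
  perp_unique : ∀ {a b c : E}, oplus a b = some one → oplus a c = some one → b = c
  oplus_one : ∀ {a b : E}, oplus a one = some b → a = zero

namespace EffectAlgebra

variable {E : Type u} [EffectAlgebra E]

/-- The orthosupplement `a^⊥`. -/
noncomputable def perp (a : E) : E := Classical.choose (exists_perp a)

/-- The partial order: `a ≤ b` iff `a ⊕ c = b` for some `c`. -/
def le (a b : E) : Prop := ∃ c : E, oplus a c = some b

/-- Sharp elements. -/
def Sharp (a : E) : Prop := ∀ x : E, le x a → le x (perp a) → x = zero

/-- Finite orthosums of lists of elements. -/
def osum : List E → Option E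
  | [] => some zero
  | a :: l => (osum l).bind fun s => oplus a s

/-- Mackey compatibility `a ↔ b`. -/
def MCompat (a b : E) : Prop :=
  ∃ a₁ b₁ c s t : E, oplus a₁ b₁ = some s ∧ oplus s c = some t ∧
    oplus a₁ c = some a ∧ oplus b₁ c = some b

/-- `a` is the supremum of the sequence `f`. -/
def IsSupSeq (f : ℕ → E) (a : E) : Prop :=
  (∀ n, le (f n) a) ∧ ∀ b : E, (∀ n, le (f n) b) → le a b

/-- `a` is the infimum of the sequence `f`. -/
def IsInfSeq (f : ℕ → E) (a : E) : Prop :=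
  (∀ n, le a (f n)) ∧ ∀ b : E, (∀ n, le b (f n)) → le b a

/-- `a` is the infimum of the set `S`. -/
def IsInfSet (S : Set E) (a : E) : Prop :=
  (∀ x ∈ S, le a x) ∧ ∀ b : E, (∀ x ∈ S, le b x) → le b a

/-- `a` is the supremum of `f` computed inside the subset `S`. -/
def IsSupSeqIn (S : Set E) (f : ℕ → E) (a : E) : Prop :=
  a ∈ S ∧ (∀ n, le (f n) a) ∧ ∀ b ∈ S, (∀ n, le (f n) b) → le a b

variable (E) in
/-- Monotone σ-completeness: every ascending sequence has a supremum. -/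
def MonotoneSigmaComplete : Prop :=
  ∀ f : ℕ → E, (∀ n, le (f n) (f (n + 1))) → ∃ a : E, IsSupSeq f a

end EffectAlgebra

open EffectAlgebra in
/-- A compression base `(J_p)_{p ∈ P}` on an effect algebra. -/
structure CompressionBase (E : Type u) [EffectAlgebra E] where
  P : Set E
  J : E → E → E
  zero_mem : zero ∈ P
  one_mem : one ∈ P
  perp_mem : ∀ p ∈ P, perp p ∈ P
  oplus_mem : ∀ p ∈ P, ∀ q ∈ P, ∀ r : E, oplus p q = some r → r ∈ P
  normal : ∀ e f d s t x y : E, oplus e f = some s → oplus s d = some t →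
    oplus e d = some x → x ∈ P → oplus f d = some y → y ∈ P → d ∈ P
  additive : ∀ p ∈ P, ∀ a b c : E, oplus a b = some c →
    oplus (J p a) (J p b) = some (J p c)
  retraction : ∀ p ∈ P, ∀ a : E, le a p → J p a = a
  focus : ∀ p ∈ P, J p one = p
  compression : ∀ p ∈ P, ∀ a : E, (J p a = zero ↔ le a (perp p))
  compose : ∀ p ∈ P, ∀ q ∈ P, ∀ r ∈ P, ∀ s t qr : E,
    oplus p q = some s → oplus s r = some t → oplus q r = some qr →
    ∀ a : E, J s (J qr a) = J q a

namespace CompressionBase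

open EffectAlgebra

variable {E : Type u} [EffectAlgebra E] (cb : CompressionBase E)

/-- The commutant `C(p)` of a projection `p`. -/
noncomputable def Cset (p : E) : Set E :=
  {a : E | oplus (cb.J p a) (cb.J (perp p) a) = some a}

/-- `PC(a)`: projections compatible with `a`. -/
noncomputable def PC (a : E) : Set E := {p : E | p ∈ cb.P ∧ a ∈ cb.Cset p}

/-- The P-bicommutant `P(a) = PC(PC(a) ∪ {a})`. -/
noncomputable def Pbicomm (a : E) : Set E :=
  {p : E | p ∈ cb.P ∧ a ∈ cb.Cset p ∧ ∀ q ∈ cb.PC a, q ∈ cb.Cset p}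

/-- `p` is the projection cover of `a`. -/
def IsProjCover (a p : E) : Prop :=
  p ∈ cb.P ∧ ∀ q ∈ cb.P, (le a q ↔ le p q)

/-- The projection cover property. -/
def ProjCoverProp : Prop := ∀ a : E, ∃ p : E, cb.IsProjCover a p

/-- `B` is a Boolean subalgebra of the set of projections. -/
noncomputable def BooleanSub (B : Set E) : Prop :=
  B ⊆ cb.P ∧ zero ∈ B ∧ one ∈ B ∧ (∀ p ∈ B, perp p ∈ B) ∧
  (∀ p ∈ B, ∀ q ∈ B, MCompat p q) ∧
  (∀ p ∈ B, ∀ q ∈ B, ∀ r : E, oplus p q = some r → r ∈ B)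

/-- The b-property. -/
noncomputable def BProperty : Prop :=
  ∀ a : E, ∃ B : Set E, cb.BooleanSub B ∧
    ∀ p ∈ cb.P, (a ∈ cb.Cset p ↔ ∀ b ∈ B, b ∈ cb.Cset p)

/-- Commutativity `aCb` of b-elements. -/
noncomputable def CommuteC (a b : E) : Prop :=
  ∀ p ∈ cb.Pbicomm a, ∀ q ∈ cb.Pbicomm b, MCompat p q

/-- The b-comparability property. -/
noncomputable def BComparability : Prop :=
  cb.BProperty ∧
  ∀ e f : E, cb.CommuteC e f → ∃ p : E, p ∈ cb.Pbicomm e ∧ p ∈ cb.Pbicomm f ∧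
    le (cb.J p e) (cb.J p f) ∧ le (cb.J (perp p) f) (cb.J (perp p) e)

/-- Spectrality: projection cover property plus b-comparability. -/
noncomputable def Spectral : Prop := cb.ProjCoverProp ∧ cb.BComparability

/-- `p` is the floor of `a` (the largest projection below `a`). -/
def IsFloor (a p : E) : Prop :=
  p ∈ cb.P ∧ le p a ∧ ∀ q ∈ cb.P, le q a → le q p

end CompressionBase

open EffectAlgebra in
/-- A sequential effect algebra (SEA). -/
class SEA (E : Type u) [EffectAlgebra E] where
  seq : E → E → E
  seq_oplus : ∀ a b c d : E, oplus b c = some d →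
    oplus (seq a b) (seq a c) = some (seq a d)
  one_seq : ∀ a : E, seq one a = a
  seq_zero_symm : ∀ a b : E, seq a b = zero → seq b a = zero
  comm_perp : ∀ a b : E, seq a b = seq b a → seq a (perp b) = seq (perp b) a
  comm_assoc : ∀ a b c : E, seq a b = seq b a → seq a (seq b c) = seq (seq a b) c
  comm_seq : ∀ a b c : E, seq c a = seq a c → seq c b = seq b c →
    seq c (seq a b) = seq (seq a b) c
  comm_oplus : ∀ a b c d : E, seq c a = seq a c → seq c b = seq b c →
    oplus a b = some d → seq c d = seq d c

namespace EffectAlgebra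

variable {E : Type u} [EffectAlgebra E]

section SEAdefs

variable [SEA E]

/-- `a | b` : the sequential product commutes. -/
def Commutes (a b : E) : Prop := SEA.seq a b = SEA.seq b a

/-- The commutant `S'` of a subset. -/
def commutant (S : Set E) : Set E := {a : E | ∀ s ∈ S, Commutes a s}

/-- The bicommutant `S''`. -/
def bicommutant (S : Set E) : Set E := commutant (commutant S)

/-- A sub-SEA: a sub-effect algebra closed under the sequential product. -/
noncomputable def SubSEA (S : Set E) : Prop :=
  zero ∈ S ∧ one ∈ S ∧ (∀ a ∈ S, perp a ∈ S) ∧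
  (∀ a ∈ S, ∀ b ∈ S, ∀ c : E, oplus a b = some c → c ∈ S) ∧
  (∀ a ∈ S, ∀ b ∈ S, SEA.seq a b ∈ S)

/-- A commutative sub-SEA. -/
noncomputable def CommSubSEA (S : Set E) : Prop :=
  SubSEA S ∧ ∀ a ∈ S, ∀ b ∈ S, Commutes a b

/-- A maximal commutative sub-SEA. -/
noncomputable def MaxCommSubSEA (S : Set E) : Prop :=
  CommSubSEA S ∧ ∀ T : Set E, CommSubSEA T → S ⊆ T → T = S

/-- `C(p)` for the canonical compression base `J_p = p ∘ ·` of a SEA. -/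
noncomputable def sC (p : E) : Set E :=
  {a : E | oplus (SEA.seq p a) (SEA.seq (perp p) a) = some a}

/-- `PC(a)` for the canonical compression base. -/
noncomputable def sPC (a : E) : Set E := {p : E | Sharp p ∧ a ∈ sC p}

/-- The P-bicommutant `P(a)` for the canonical compression base. -/
noncomputable def sPbicomm (a : E) : Set E :=
  {p : E | Sharp p ∧ a ∈ sC p ∧ ∀ q ∈ sPC a, q ∈ sC p}

/-- `p` is the projection cover of `a` (canonical compression base). -/
noncomputable def sIsProjCover (a p : E) : Prop :=
  Sharp p ∧ ∀ q : E, Sharp q → (le a q ↔ le p q)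

variable (E) in
/-- The projection cover property (canonical compression base). -/
noncomputable def sProjCoverProp : Prop := ∀ a : E, ∃ p : E, sIsProjCover a p

/-- `B` is a Boolean subalgebra of the sharp elements. -/
noncomputable def sBooleanSub (B : Set E) : Prop :=
  (∀ p ∈ B, Sharp p) ∧ zero ∈ B ∧ one ∈ B ∧ (∀ p ∈ B, perp p ∈ B) ∧
  (∀ p ∈ B, ∀ q ∈ B, MCompat p q) ∧
  (∀ p ∈ B, ∀ q ∈ B, ∀ r : E, oplus p q = some r → r ∈ B)

variable (E) in
/-- The b-property (canonical compression base). -/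
noncomputable def sBProperty : Prop :=
  ∀ a : E, ∃ B : Set E, sBooleanSub B ∧
    ∀ p : E, Sharp p → (a ∈ sC p ↔ ∀ b ∈ B, b ∈ sC p)

/-- `aCb` (canonical compression base). -/
noncomputable def sCommuteC (a b : E) : Prop :=
  ∀ p ∈ sPbicomm a, ∀ q ∈ sPbicomm b, MCompat p q

variable (E) in
/-- The b-comparability property (canonical compression base). -/
noncomputable def sBComparability : Prop :=
  sBProperty E ∧
  ∀ e f : E, sCommuteC e f → ∃ p : E, p ∈ sPbicomm e ∧ p ∈ sPbicomm f ∧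
    le (SEA.seq p e) (SEA.seq p f) ∧
    le (SEA.seq (perp p) f) (SEA.seq (perp p) e)

variable (E) in
/-- Spectrality of a SEA with respect to its canonical compression base. -/
noncomputable def sSpectral : Prop := sProjCoverProp E ∧ sBComparability E

/-- `p` is the floor of `a` (canonical compression base). -/
noncomputable def sIsFloor (a p : E) : Prop :=
  Sharp p ∧ le p a ∧ ∀ q : E, Sharp q → le q a → le q p

variable (E) in
/-- Property A. -/
def PropertyA : Prop :=
  ∀ (f : ℕ → E) (a b : E), (∀ n, le (f n) (f (n + 1))) →
    (∀ m n, Commutes (f m) (f n)) → IsSupSeq f a →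
    (∀ n, Commutes (f n) b) → Commutes a b

variable (E) in
/-- A σ-SEA. -/
def SigmaSEA : Prop :=
  MonotoneSigmaComplete E ∧
  ∀ (f : ℕ → E) (m : E), (∀ n, le (f (n + 1)) (f n)) → IsInfSeq f m →
    ∀ b : E, IsInfSeq (fun n => SEA.seq b (f n)) (SEA.seq b m) ∧
      ((∀ n, Commutes b (f n)) → Commutes b m)

/-- Iterated sequential powers: `seqPow a n = a^(n+1)`. -/
def seqPow (a : E) : ℕ → E
  | 0 => a
  | n + 1 => SEA.seq a (seqPow a n)

end SEAdefs

end EffectAlgebra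

open EffectAlgebra in
/-- A convex effect algebra: scalar multiplication by reals in `[0,1]`. -/
class ConvexEA (E : Type u) [EffectAlgebra E] where
  smul : ℝ → E → E
  smul_smul : ∀ (l m : ℝ) (a : E), 0 ≤ l → l ≤ 1 → 0 ≤ m → m ≤ 1 →
    smul m (smul l a) = smul (l * m) a
  smul_add_coeff : ∀ (l m : ℝ) (a : E), 0 ≤ l → 0 ≤ m → l + m ≤ 1 →
    oplus (smul l a) (smul m a) = some (smul (l + m) a)
  smul_oplus : ∀ (l : ℝ) (a b c : E), 0 ≤ l → l ≤ 1 → oplus a b = some c →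
    oplus (smul l a) (smul l b) = some (smul l c)
  one_smul : ∀ a : E, smul 1 a = a

namespace EffectAlgebra

variable {E : Type u} [EffectAlgebra E]

section Convexdefs

variable [ConvexEA E]

variable (E) in
/-- Strong archimedeanity. -/
def StronglyArchimedean : Prop :=
  ∀ a b c : E,
    (∀ n : ℕ, ∃ d : E, oplus b (ConvexEA.smul (1 / (n + 1) : ℝ) c) = some d ∧ le a d) →
    le a b

/-- `DistLE a b ε` encodes `‖a - b‖ ≤ ε` in the order unit norm:
`(1/2)a ≤ (1/2)b ⊕ (ε/2)1` and symmetrically (with `ε` clamped to `[0,1]`). -/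
def DistLE (a b : E) (ε : ℝ) : Prop :=
  (∃ d : E, oplus (ConvexEA.smul (2⁻¹ : ℝ) b) (ConvexEA.smul (min ε 1 / 2) one) = some d ∧
    le (ConvexEA.smul (2⁻¹ : ℝ) a) d) ∧
  (∃ d : E, oplus (ConvexEA.smul (2⁻¹ : ℝ) a) (ConvexEA.smul (min ε 1 / 2) one) = some d ∧
    le (ConvexEA.smul (2⁻¹ : ℝ) b) d)

/-- Norm convergence of a sequence. -/
def NormLimit (f : ℕ → E) (a : E) : Prop :=
  ∀ ε : ℝ, 0 < ε → ∃ N : ℕ, ∀ n ≥ N, DistLE (f n) a ε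

/-- Cauchy sequences with respect to the order unit norm. -/
def CauchySeqE (f : ℕ → E) : Prop :=
  ∀ ε : ℝ, 0 < ε → ∃ N : ℕ, ∀ m ≥ N, ∀ n ≥ N, DistLE (f m) (f n) ε

variable (E) in
/-- Norm completeness. -/
def NormComplete : Prop := ∀ f : ℕ → E, CauchySeqE f → ∃ a : E, NormLimit f a

/-- A norm-closed subset. -/
def NormClosedSet (S : Set E) : Prop :=
  ∀ (f : ℕ → E) (a : E), (∀ n, f n ∈ S) → NormLimit f a → a ∈ S

/-- A norm-complete subset. -/
def NormCompleteSet (S : Set E) : Prop :=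
  ∀ f : ℕ → E, (∀ n, f n ∈ S) → CauchySeqE f → ∃ a ∈ S, NormLimit f a

/-- One-dimensional elements. -/
def OneDim (a : E) : Prop :=
  ∀ b : E, le b a → ∃ t : ℝ, 0 ≤ t ∧ t ≤ 1 ∧ b = ConvexEA.smul t a

/-- `l` is a representation of `a` as a simple element:
`a = ⊕ μ_i p_i` with `μ_i ∈ [0,1]`, `p_i` sharp and `⊕ p_i = 1`. -/
noncomputable def SimpleRep (a : E) (l : List (ℝ × E)) : Prop :=
  (∀ x ∈ l, x.1 ∈ Set.Icc (0 : ℝ) 1 ∧ Sharp x.2) ∧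
  osum (l.map Prod.snd) = some one ∧
  osum (l.map fun x => ConvexEA.smul x.1 x.2) = some a

/-- Simple elements. -/
noncomputable def SimpleElem (a : E) : Prop := ∃ l : List (ℝ × E), SimpleRep a l

/-- A reduced representation: strictly increasing coefficients, nonzero sharp elements. -/
noncomputable def ReducedRep (a : E) (l : List (ℝ × E)) : Prop :=
  SimpleRep a l ∧ (l.map Prod.fst).Chain' (· < ·) ∧ ∀ x ∈ l, x.2 ≠ zero

end Convexdefs

section SpecRes

variable [SEA E] [ConvexEA E]

/-- `p` is the spectral resolution of `a` (canonical compression base): a family of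
projections in the bicommutant of `a`, nondecreasing and right continuous on `[0,1]`,
with `J_{p_λ}(a) ≤ λ p_λ` and `λ p_λ^⊥ ≤ J_{p_λ^⊥}(a)`. -/
noncomputable def sIsSpecRes (a : E) (p : ℝ → E) : Prop :=
  (∀ l : ℝ, 0 ≤ l → l ≤ 1 → p l ∈ sPbicomm a) ∧
  (∀ l m : ℝ, 0 ≤ l → l ≤ m → m ≤ 1 → le (p l) (p m)) ∧
  (∀ l : ℝ, 0 ≤ l → l < 1 →
    IsInfSet {x : E | ∃ m : ℝ, l < m ∧ m ≤ 1 ∧ x = p m} (p l)) ∧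
  (∀ l : ℝ, 0 ≤ l → l ≤ 1 →
    le (SEA.seq (p l) a) (ConvexEA.smul l (p l)) ∧
    le (ConvexEA.smul l (perp (p l))) (SEA.seq (perp (p l)) a))

end SpecRes

end EffectAlgebra

namespace CompressionBase

open EffectAlgebra

variable {E : Type u} [EffectAlgebra E] [ConvexEA E] (cb : CompressionBase E)

/-- `p` is the spectral resolution of `a` with respect to the compression base `cb`. -/
noncomputable def IsSpecRes (a : E) (p : ℝ → E) : Prop :=
  (∀ l : ℝ, 0 ≤ l → l ≤ 1 → p l ∈ cb.Pbicomm a) ∧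
  (∀ l m : ℝ, 0 ≤ l → l ≤ m → m ≤ 1 → le (p l) (p m)) ∧
  (∀ l : ℝ, 0 ≤ l → l < 1 →
    IsInfSet {x : E | ∃ m : ℝ, l < m ∧ m ≤ 1 ∧ x = p m} (p l)) ∧
  (∀ l : ℝ, 0 ≤ l → l ≤ 1 →
    le (cb.J (p l) a) (ConvexEA.smul l (p l)) ∧
    le (ConvexEA.smul l (perp (p l))) (cb.J (perp (p l)) a))

end CompressionBase


/-!
The map `b ↦ a ∘ b` is additive, hence commutes with rational multiples `k/n`, and strong
archimedeanity squeezes `a ∘ (λb)` between `(k/n)(a ∘ b)` and `((k+1)/n)(a ∘ b)`.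
For the left argument, `λ1` is central: `b` commutes with `(1/n)b` and with `(1/n)b^⊥`, hence with
`(1/n)1` and all `(k/n)1`, and property A passes this on to `λ1`, the supremum of its dyadic
truncations. Then `(λa) ∘ b = ((λ1) ∘ a) ∘ b = (λ1) ∘ (a ∘ b) = λ(a ∘ b)`, and `a | b` gives
`a | (λ1) ∘ b = λb`.
-/

theorem exists_natCast_div_le_le_succ_div {l : ℝ} (h0 : 0 ≤ l) (h1 : l ≤ 1) {n : ℕ}
    (hn : 0 < n) : ∃ k : ℕ, k + 1 ≤ n ∧ (k : ℝ) / n ≤ l ∧ l ≤ ((k + 1 : ℕ) : ℝ) / n := by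
  have hnR : (0 : ℝ) < n := Nat.cast_pos.2 hn
  refine ⟨min ⌊l * n⌋₊ (n - 1), by omega, ?_, ?_⟩
  · rw [div_le_iff₀ hnR]
    exact (Nat.cast_le.2 (min_le_left _ _)).trans (Nat.floor_le (by positivity))
  · rw [le_div_iff₀ hnR]
    rcases le_total ⌊l * n⌋₊ (n - 1) with h | h
    · rw [min_eq_left h, Nat.cast_succ]
      exact (Nat.lt_floor_add_one _).le
    · rw [min_eq_right h, Nat.sub_add_cancel hn]
      nlinarith

theorem floor_mul_two_pow_le {l : ℝ} (h1 : l ≤ 1) (n : ℕ) : ⌊l * 2 ^ n⌋₊ ≤ 2 ^ n := by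
  apply Nat.floor_le_of_le
  push_cast
  nlinarith [pow_pos (two_pos : (0 : ℝ) < 2) n]

theorem floor_mul_two_pow_div_le {l : ℝ} (h0 : 0 ≤ l) (n : ℕ) : (⌊l * 2 ^ n⌋₊ : ℝ) / 2 ^ n ≤ l :=
  div_le_of_le_mul₀ (by positivity) h0 (Nat.floor_le (by positivity))

theorem floor_mul_two_pow_div_le_succ {l : ℝ} (h0 : 0 ≤ l) (n : ℕ) :
    (⌊l * 2 ^ n⌋₊ : ℝ) / 2 ^ n ≤ (⌊l * 2 ^ (n + 1)⌋₊ : ℝ) / 2 ^ (n + 1) := by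
  have hfloor : 2 * ⌊l * 2 ^ n⌋₊ ≤ ⌊l * 2 ^ (n + 1)⌋₊ := by
    apply Nat.le_floor
    rw [pow_succ, Nat.cast_mul, Nat.cast_two, mul_comm (2 : ℝ), ← mul_assoc]
    exact mul_le_mul_of_nonneg_right (Nat.floor_le (by positivity)) zero_le_two
  rw [div_le_div_iff₀ (by positivity) (by positivity)]
  calc (⌊l * 2 ^ n⌋₊ : ℝ) * 2 ^ (n + 1) = ((2 * ⌊l * 2 ^ n⌋₊ : ℕ) : ℝ) * 2 ^ n := by
        push_cast; ring
    _ ≤ _ := by gcongr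

theorem le_floor_mul_two_pow_div_add (l : ℝ) {n : ℕ} (hn : 0 < n) :
    l ≤ (⌊l * 2 ^ n⌋₊ : ℝ) / 2 ^ n + 1 / n := by
  have h2 : (0 : ℝ) < 2 ^ n := by positivity
  have hn2 : (n : ℝ) ≤ 2 ^ n := by exact_mod_cast Nat.lt_two_pow_self.le
  calc l = l * 2 ^ n / 2 ^ n := (mul_div_cancel_right₀ l h2.ne').symm
    _ ≤ (⌊l * 2 ^ n⌋₊ + 1) / 2 ^ n := by gcongr; exact (Nat.lt_floor_add_one _).le
    _ ≤ (⌊l * 2 ^ n⌋₊ : ℝ) / 2 ^ n + 1 / n := by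
      rw [add_div]; gcongr

namespace EffectAlgebra

open ConvexEA (smul smul_add_coeff smul_oplus)
open SEA (seq)

variable {E : Type u} [EffectAlgebra E]

theorem oplus_perp (a : E) : oplus a (perp a) = some one :=
  Classical.choose_spec (exists_perp a)

theorem perp_oplus (a : E) : oplus (perp a) a = some one := by
  rw [oplus_comm]; exact oplus_perp a

theorem perp_perp (a : E) : perp (perp a) = a :=
  perp_unique (oplus_perp (perp a)) (perp_oplus a)

theorem one_oplus_zero : oplus (one : E) zero = some one := by
  obtain ⟨b, hb⟩ := exists_perp (one : E)
  have hb0 : b = zero := oplus_one (by rwa [oplus_comm] at hb)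
  rwa [hb0] at hb

theorem oplus_zero (a : E) : oplus a zero = some a := by
  obtain ⟨c, hc, hac⟩ := oplus_assoc (perp_oplus a) one_oplus_zero
  rwa [← perp_unique (perp_oplus a) hac] at hc

theorem zero_oplus (a : E) : oplus zero a = some a := by
  rw [oplus_comm]; exact oplus_zero a

theorem perp_zero : perp (zero : E) = one :=
  perp_unique (oplus_perp zero) (zero_oplus one)

theorem oplus_right_cancel {a b c d : E} (ha : oplus a c = some d) (hb : oplus b c = some d) :
    a = b := by
  obtain ⟨e, he, hae⟩ := oplus_assoc ha (oplus_perp d)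
  obtain ⟨e', he', hbe⟩ := oplus_assoc hb (oplus_perp d)
  obtain rfl : e = e' := Option.some.inj (he.symm.trans he')
  rw [oplus_comm] at hae hbe
  exact perp_unique hae hbe

theorem oplus_left_cancel {a b c d : E} (ha : oplus c a = some d) (hb : oplus c b = some d) :
    a = b := by
  rw [oplus_comm] at ha hb
  exact oplus_right_cancel ha hb

theorem oplus_assoc' {a b c bc abc : E} (hbc : oplus b c = some bc)
    (habc : oplus a bc = some abc) : ∃ ab, oplus a b = some ab ∧ oplus ab c = some abc := by
  rw [oplus_comm] at hbc habc
  obtain ⟨ba, hba, h⟩ := oplus_assoc hbc habc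
  rw [oplus_comm] at hba h
  exact ⟨ba, hba, h⟩

theorem eq_zero_of_oplus_eq_zero {a b : E} (h : oplus a b = some zero) : a = zero := by
  obtain ⟨s, hs, -⟩ := oplus_assoc h (zero_oplus one)
  obtain rfl : b = zero := oplus_one hs
  exact Option.some.inj ((oplus_zero a).symm.trans h)

theorem le_of_oplus {a b c : E} (h : oplus a b = some c) : le a c := ⟨b, h⟩

theorem le.refl (a : E) : le a a := le_of_oplus (oplus_zero a)

theorem le_one (a : E) : le a one := le_of_oplus (oplus_perp a)

theorem le.trans {a b c : E} (hab : le a b) (hbc : le b c) : le a c := by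
  obtain ⟨x, hx⟩ := hab
  obtain ⟨y, hy⟩ := hbc
  obtain ⟨z, -, hz⟩ := oplus_assoc hx hy
  exact le_of_oplus hz

theorem le.antisymm {a b : E} (hab : le a b) (hba : le b a) : a = b := by
  obtain ⟨c, hc⟩ := hab
  obtain ⟨d, hd⟩ := hba
  obtain ⟨e, he, hae⟩ := oplus_assoc hc hd
  obtain rfl : e = zero := oplus_left_cancel hae (oplus_zero a)
  obtain rfl : c = zero := eq_zero_of_oplus_eq_zero he
  exact Option.some.inj ((oplus_zero a).symm.trans hc)

theorem exists_oplus_le_of_le_left {a a' b t : E} (ha : le a a') (h : oplus a' b = some t) :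
    ∃ s, oplus a b = some s ∧ le s t := by
  obtain ⟨x, hx⟩ := ha
  obtain ⟨xb, hxb, haxb⟩ := oplus_assoc hx h
  rw [oplus_comm] at hxb
  obtain ⟨ab, hab, habx⟩ := oplus_assoc' hxb haxb
  exact ⟨ab, hab, le_of_oplus habx⟩

theorem exists_oplus_le_of_le {a a' b b' t : E} (ha : le a a') (hb : le b b')
    (h : oplus a' b' = some t) : ∃ s, oplus a b = some s ∧ le s t := by
  obtain ⟨s, hs, hst⟩ := exists_oplus_le_of_le_left ha h
  rw [oplus_comm] at hs
  obtain ⟨s', hs', hs's⟩ := exists_oplus_le_of_le_left hb hs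
  rw [oplus_comm] at hs'
  exact ⟨s', hs', hs's.trans hst⟩

def IsAdditive (f : E → E) : Prop :=
  ∀ ⦃b c d : E⦄, oplus b c = some d → oplus (f b) (f c) = some (f d)

namespace IsAdditive

variable {f g : E → E}

theorem map_zero (hf : IsAdditive f) : f zero = zero :=
  oplus_right_cancel (hf (zero_oplus zero)) (zero_oplus _)

theorem map_le_map (hf : IsAdditive f) {b c : E} (h : le b c) : le (f b) (f c) :=
  h.elim fun _ hd => le_of_oplus (hf hd)

theorem comp (hf : IsAdditive f) (hg : IsAdditive g) : IsAdditive (f ∘ g) :=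
  fun _ _ _ h => hf (hg h)

end IsAdditive

section Convex

variable [ConvexEA E]

theorem zero_smul (a : E) : smul 0 a = zero := by
  have h := smul_add_coeff 0 1 a le_rfl zero_le_one (by norm_num)
  rw [zero_add, ConvexEA.one_smul] at h
  exact oplus_right_cancel h (zero_oplus a)

theorem isAdditive_smul {l : ℝ} (h0 : 0 ≤ l) (h1 : l ≤ 1) : IsAdditive (smul l : E → E) :=
  fun b c d h => smul_oplus l b c d h0 h1 h

theorem smul_le_smul_of_le_coeff {s t : ℝ} (hs : 0 ≤ s) (hst : s ≤ t) (ht : t ≤ 1) (a : E) :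
    le (smul s a) (smul t a) := by
  have h := smul_add_coeff s (t - s) a hs (by linarith) (by linarith)
  rw [add_sub_cancel] at h
  exact le_of_oplus h

theorem smul_half_oplus_smul_half (a : E) : oplus (smul 2⁻¹ a) (smul 2⁻¹ a) = some a := by
  have h := smul_add_coeff 2⁻¹ 2⁻¹ a (by norm_num) (by norm_num) (by norm_num)
  rwa [show (2⁻¹ : ℝ) + 2⁻¹ = 1 by norm_num, ConvexEA.one_smul] at h

theorem le_of_smul_half_le {a b : E} (h : le (smul 2⁻¹ a) (smul 2⁻¹ b)) : le a b := by
  obtain ⟨s, hs, hsb⟩ := exists_oplus_le_of_le h h (smul_half_oplus_smul_half b)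
  rwa [Option.some.inj (hs.symm.trans (smul_half_oplus_smul_half a))] at hsb

theorem smul_natCast_div_oplus {k n : ℕ} (hk : k + 1 ≤ n) (b : E) :
    oplus (smul ((k : ℝ) / n) b) (smul (1 / (n : ℝ)) b) = some (smul (((k + 1 : ℕ) : ℝ) / n) b) := by
  have hnR : (0 : ℝ) < n := Nat.cast_pos.2 (by omega)
  rw [Nat.cast_succ, add_div]
  exact smul_add_coeff _ _ b (by positivity) (by positivity)
    (by rw [← add_div, div_le_one hnR]; exact_mod_cast hk)

theorem IsAdditive.map_smul_natCast_div_of_map_smul_one_div {g : E → E} (hg : IsAdditive g)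
    {n : ℕ} {b z : E} (h : g (smul (1 / (n : ℝ)) b) = smul (1 / (n : ℝ)) z) {k : ℕ}
    (hk : k ≤ n) : g (smul ((k : ℝ) / n) b) = smul ((k : ℝ) / n) z := by
  induction k with
  | zero => simp only [Nat.cast_zero, zero_div, zero_smul, hg.map_zero]
  | succ k ih =>
    have hstep := hg (smul_natCast_div_oplus hk b)
    rw [ih (by omega), h, smul_natCast_div_oplus hk z] at hstep
    exact (Option.some.inj hstep).symm

theorem IsAdditive.map_smul_one_div {f : E → E} (hf : IsAdditive f) {n : ℕ} (hn : 0 < n)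
    (b : E) : f (smul (1 / (n : ℝ)) b) = smul (1 / (n : ℝ)) (f b) := by
  have hn' : (0 : ℝ) < n := Nat.cast_pos.2 hn
  -- `(1/n) f((k/n)b)` and `(k/n) f((1/n)b)` both grow by `(1/n) f((1/n)b)` in `k`; take `k = n`.
  have h := ((isAdditive_smul (by positivity) (by rw [div_le_one hn']; exact_mod_cast hn)).comp
    hf).map_smul_natCast_div_of_map_smul_one_div (b := b) (z := f (smul (1 / (n : ℝ)) b)) rfl
    le_rfl
  rw [Function.comp_apply, div_self hn'.ne', ConvexEA.one_smul, ConvexEA.one_smul] at h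
  exact h.symm

theorem IsAdditive.map_smul_natCast_div {f : E → E} (hf : IsAdditive f) {k n : ℕ} (hn : 0 < n)
    (hk : k ≤ n) (b : E) : f (smul ((k : ℝ) / n) b) = smul ((k : ℝ) / n) (f b) :=
  hf.map_smul_natCast_div_of_map_smul_one_div (hf.map_smul_one_div hn b) hk

/-- Halving makes room: `(1/2)v ⊕ ε(1/2)1` is always defined, as strong archimedeanity requires. -/
theorem exists_smul_half_le_oplus_of_sandwich {u v y : E} {t r ε : ℝ} (ht : 0 ≤ t) (hr : 0 ≤ r)
    (hr1 : r ≤ 1) (hε : 0 ≤ ε) (hε1 : ε ≤ 1) (htr : t ≤ r + ε) (ht1 : t ≤ 1)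
    (hu : le u (smul t y)) (hv : le (smul r y) v) :
    ∃ d, oplus (smul 2⁻¹ v) (smul ε (smul 2⁻¹ (one : E))) = some d ∧ le (smul 2⁻¹ u) d := by
  have hhalf_le : ∀ {a b : E}, le a b → le (smul 2⁻¹ a) (smul 2⁻¹ b) :=
    (isAdditive_smul (by norm_num) (by norm_num)).map_le_map
  have hsmul_half : ∀ {s : ℝ} (x : E), 0 ≤ s → s ≤ 1 → smul 2⁻¹ (smul s x) = smul (s * 2⁻¹) x :=
    fun x h0 h1 => ConvexEA.smul_smul _ _ x h0 h1 (by norm_num) (by norm_num)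
  obtain ⟨d, hd, -⟩ := exists_oplus_le_of_le (hhalf_le (le_one v))
    (smul_le_smul_of_le_coeff (s := 2⁻¹ * ε) (by positivity) (by linarith) (by norm_num) one)
    (smul_half_oplus_smul_half one)
  refine ⟨d, by rwa [ConvexEA.smul_smul _ _ _ (by norm_num) (by norm_num) hε hε1], ?_⟩
  have hrv : le (smul (r * 2⁻¹) y) (smul 2⁻¹ v) := by
    rw [← hsmul_half y hr hr1]; exact hhalf_le hv
  have hy : le (smul (2⁻¹ * ε) y) (smul (2⁻¹ * ε) one) :=
    (isAdditive_smul (by positivity) (by linarith)).map_le_map (le_one y)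
  obtain ⟨s, hs, hsd⟩ := exists_oplus_le_of_le hrv hy hd
  obtain rfl := Option.some.inj <|
    (smul_add_coeff _ _ y (by positivity) (by positivity) (by linarith)).symm.trans hs
  have hut : le (smul 2⁻¹ u) (smul (t * 2⁻¹) y) := by
    rw [← hsmul_half y ht ht1]; exact hhalf_le hu
  exact (hut.trans (smul_le_smul_of_le_coeff (by positivity) (by linarith) (by linarith) y)).trans
    hsd

theorem StronglyArchimedean.le_of_forall_smul_sandwich (harch : StronglyArchimedean E) {u v : E}
    (H : ∀ n : ℕ, 0 < n → ∃ (y : E) (t r : ℝ), 0 ≤ t ∧ t ≤ 1 ∧ 0 ≤ r ∧ r ≤ 1 ∧ t ≤ r + 1 / n ∧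
      le u (smul t y) ∧ le (smul r y) v) : le u v := by
  refine le_of_smul_half_le (harch _ _ (smul 2⁻¹ one) fun m => ?_)
  obtain ⟨y, t, r, ht, ht1, hr, hr1, htr, hu, hv⟩ := H (m + 1) m.succ_pos
  push_cast at htr
  exact exists_smul_half_le_oplus_of_sandwich ht hr hr1 (by positivity)
    (div_le_one_of_le₀ (by linarith) (by positivity)) htr ht1 hu hv

theorem StronglyArchimedean.eq_smul_of_forall_bracket (harch : StronglyArchimedean E) {x y : E}
    {l : ℝ} (h0 : 0 ≤ l) (h1 : l ≤ 1)
    (H : ∀ k n : ℕ, k + 1 ≤ n → (k : ℝ) / n ≤ l → l ≤ ((k + 1 : ℕ) : ℝ) / n →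
      le (smul ((k : ℝ) / n) y) x ∧ le x (smul (((k + 1 : ℕ) : ℝ) / n) y)) :
    x = smul l y := by
  apply le.antisymm <;> refine harch.le_of_forall_smul_sandwich fun n hn => ?_
  all_goals
    obtain ⟨k, hkn, hkl, hlk⟩ := exists_natCast_div_le_le_succ_div h0 h1 hn
    obtain ⟨hlow, hup⟩ := H k n hkn hkl hlk
    have hk1 : ((k + 1 : ℕ) : ℝ) / n ≤ 1 :=
      div_le_one_of_le₀ (by exact_mod_cast hkn) (by positivity)
    have hsucc : ((k + 1 : ℕ) : ℝ) / n = k / n + 1 / n := by rw [Nat.cast_succ, add_div]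
  · exact ⟨y, _, l, by positivity, hk1, h0, h1, by linarith, hup, le.refl _⟩
  · exact ⟨y, _, _, by positivity, hk1, by positivity, hkl.trans h1, by linarith,
      smul_le_smul_of_le_coeff h0 hlk hk1 y, hlow⟩

theorem IsAdditive.map_smul (harch : StronglyArchimedean E) {f : E → E} (hf : IsAdditive f)
    {l : ℝ} (h0 : 0 ≤ l) (h1 : l ≤ 1) (b : E) : f (smul l b) = smul l (f b) := by
  refine harch.eq_smul_of_forall_bracket h0 h1 fun k n hkn hkl hlk => ?_
  have hn : 0 < n := by omega
  rw [← hf.map_smul_natCast_div hn (by omega), ← hf.map_smul_natCast_div hn hkn]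
  exact ⟨hf.map_le_map (smul_le_smul_of_le_coeff (by positivity) hkl h1 b),
    hf.map_le_map (smul_le_smul_of_le_coeff h0 hlk
      (div_le_one_of_le₀ (by exact_mod_cast hkn) (by positivity)) b)⟩

theorem StronglyArchimedean.isSupSeq_smul (harch : StronglyArchimedean E) {q : ℕ → ℝ} {l : ℝ}
    (hq0 : ∀ m, 0 ≤ q m) (hql : ∀ m, q m ≤ l) (h1 : l ≤ 1)
    (happrox : ∀ n : ℕ, 0 < n → ∃ m, l ≤ q m + 1 / n) (x : E) :
    IsSupSeq (fun m => smul (q m) x) (smul l x) :=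
  ⟨fun m => smul_le_smul_of_le_coeff (hq0 m) (hql m) h1 x, fun _ hc =>
    harch.le_of_forall_smul_sandwich fun n hn =>
      let ⟨m, hm⟩ := happrox n hn
      ⟨x, l, q m, (hq0 0).trans (hql 0), h1, hq0 m, (hql m).trans h1, hm, le.refl _, hc m⟩⟩

end Convex

section Sequential

variable [SEA E]

theorem isAdditive_seq (a : E) : IsAdditive (seq a) := SEA.seq_oplus a

theorem seq_zero (a : E) : seq a (zero : E) = zero := (isAdditive_seq a).map_zero

theorem zero_seq (a : E) : seq (zero : E) a = zero := SEA.seq_zero_symm a zero (seq_zero a)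

theorem Commutes.refl (a : E) : Commutes a a := rfl

theorem Commutes.symm {a b : E} (h : Commutes a b) : Commutes b a := Eq.symm h

theorem commutes_zero (a : E) : Commutes a zero := (seq_zero a).trans (zero_seq a).symm

theorem Commutes.perp {a b : E} (h : Commutes a b) : Commutes a (perp b) := SEA.comm_perp a b h

theorem Commutes.oplus {a b c d : E} (ha : Commutes c a) (hb : Commutes c b)
    (h : oplus a b = some d) : Commutes c d :=
  SEA.comm_oplus a b c d ha hb h

theorem Commutes.seq {a b c : E} (ha : Commutes c a) (hb : Commutes c b) :
    Commutes c (seq a b) :=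
  SEA.comm_seq a b c ha hb

theorem seq_one (a : E) : seq a one = a := by
  have h : Commutes a (perp zero) := (commutes_zero a).perp
  rw [perp_zero] at h
  exact h.trans (SEA.one_seq a)

variable [ConvexEA E]

theorem Commutes.smul_natCast_div {a c : E} {n : ℕ} (h : Commutes a (smul (1 / (n : ℝ)) c))
    {k : ℕ} (hk : k ≤ n) : Commutes a (smul ((k : ℝ) / n) c) := by
  induction k with
  | zero => simpa only [Nat.cast_zero, zero_div, zero_smul] using commutes_zero a
  | succ k ih => exact (ih (by omega)).oplus h (smul_natCast_div_oplus hk c)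

theorem smul_one_div_commutes_self (c : E) {n : ℕ} (hn : 0 < n) :
    Commutes (smul (1 / (n : ℝ)) c) c := by
  simpa only [div_self (Nat.cast_ne_zero (R := ℝ).2 hn.ne'), ConvexEA.one_smul] using
    (Commutes.refl (smul (1 / (n : ℝ)) c)).smul_natCast_div le_rfl

theorem commutes_smul_natCast_div_one (b : E) {k n : ℕ} (hn : 0 < n) (hk : k ≤ n) :
    Commutes b (smul ((k : ℝ) / n) one) := by
  have hn' : (0 : ℝ) < n := Nat.cast_pos.2 hn
  have hb : Commutes b (smul (1 / (n : ℝ)) b) := (smul_one_div_commutes_self b hn).symm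
  have hb' : Commutes b (smul (1 / (n : ℝ)) (perp b)) := by
    simpa only [perp_perp] using (smul_one_div_commutes_self (perp b) hn).perp.symm
  refine Commutes.smul_natCast_div (hb.oplus hb' (smul_oplus _ _ _ _ (by positivity) ?_
    (oplus_perp b))) hk
  rw [div_le_one hn']; exact_mod_cast hn

theorem commutes_smul_one (harch : StronglyArchimedean E) (hA : PropertyA E) {l : ℝ}
    (h0 : 0 ≤ l) (h1 : l ≤ 1) (b : E) : Commutes (smul l one) b := by
  have hdyadic : ∀ m (c : E), Commutes c (smul ((⌊l * 2 ^ m⌋₊ : ℝ) / 2 ^ m) one) := fun m c => by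
    simpa only [Nat.cast_pow, Nat.cast_ofNat] using
      commutes_smul_natCast_div_one c (pow_pos two_pos m) (floor_mul_two_pow_le h1 m)
  exact hA _ _ b
    (fun m => smul_le_smul_of_le_coeff (by positivity) (floor_mul_two_pow_div_le_succ h0 m)
      ((floor_mul_two_pow_div_le h0 _).trans h1) one)
    (fun _ n => hdyadic n _)
    (harch.isSupSeq_smul (fun _ => by positivity) (floor_mul_two_pow_div_le h0) h1
      (fun _ hn => ⟨_, le_floor_mul_two_pow_div_add l hn⟩) one)
    fun m => (hdyadic m b).symm

end Sequential

end EffectAlgebra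

open EffectAlgebra in
/-- in a strongly archimedean convex SEA with property A, the sequential
product is homogeneous in both arguments, and `a|b` implies `a|(λb)`. -/
theorem stmt7 {E : Type u} [EffectAlgebra E] [SEA E] [ConvexEA E]
    (harch : StronglyArchimedean E) (hA : PropertyA E)
    (a b : E) (l : ℝ) (h0 : 0 ≤ l) (h1 : l ≤ 1) :
    SEA.seq a (ConvexEA.smul l b) = ConvexEA.smul l (SEA.seq a b) ∧
    SEA.seq (ConvexEA.smul l a) b = ConvexEA.smul l (SEA.seq a b) ∧
    (Commutes a b → Commutes a (ConvexEA.smul l b)) := by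
  have hcentral : ∀ c : E, Commutes (ConvexEA.smul l one) c := commutes_smul_one harch hA h0 h1
  have hscalar : ∀ c : E, SEA.seq (ConvexEA.smul l one) c = ConvexEA.smul l c := fun c => by
    rw [hcentral c, (isAdditive_seq c).map_smul harch h0 h1, seq_one]
  refine ⟨(isAdditive_seq a).map_smul harch h0 h1 b, ?_, fun hab => ?_⟩
  · rw [← hscalar a, ← SEA.comm_assoc _ a b (hcentral a), hscalar]
  · rw [← hscalar b]
    exact (hcentral a).symm.seq hab
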